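/- arXiv:2509.20521 — 5 statements merged into one kernel-verified Lean document; each statement's English description precedes it below -/
import Mathlib

section
/- The number of compositions (c_1, ..., c_t) of n into positive integers satisfying c_{2i-1} > c_{2i} for every i with 2i ≤ t equals the n-th Fibonacci number F_n (with F_0 = 0, F_1 = 1). -/
/-- `l` is a composition of `n`: a list of positive integers summing to `n`. -/
def IsComposition (n : ℕ) (l : List ℕ) : Prop := (∀ x ∈ l, 0 < x) ∧ l.sum = n

/-- The scaled Arndt condition: `s * c_{2i-1} > t * c_{2i}` for each pair
(0-indexed: `s * l[2i] > t * l[2i+1]`). -/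
def ArndtCond (s t : ℕ) (l : List ℕ) : Prop :=
  ∀ i : ℕ, 2 * i + 1 < l.length → t * l[2 * i + 1]! < s * l[2 * i]!

/-- `a_{s,t}(n)`: the number of scaled Arndt compositions of `n`. -/
noncomputable def arndtCount (s t n : ℕ) : ℕ :=
  Nat.card {l : List ℕ // IsComposition n l ∧ ArndtCond s t l}

/-- Number of compositions of `n` with all parts in the set `A`. -/
noncomputable def compCount (A : Set ℕ) (n : ℕ) : ℕ :=
  Nat.card {l : List ℕ // IsComposition n l ∧ ∀ x ∈ l, x ∈ A}

/-!
Write `A n` for the Arndt compositions of `n` and `T n` for those whose leading pair is tight,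
`c₁ = c₂ + 1`. For `n > 0`, lowering the first part by one maps `A (n + 1) \ T (n + 1)`
bijectively onto `A n`. An element of `T (n + 3)` either starts with the pair `(2, 1)`, which can
be deleted to leave an element of `A n`, or both parts of its leading pair can be lowered by one,
giving an element of `T (n + 1)`. So `|A (n + 1)| = |T (n + 1)| + |A n|` and
`|T (n + 3)| = |T (n + 1)| + |A n|`, which together give `|A (n + 3)| = |A (n + 2)| + |A (n + 1)|`.
-/

@[simp]
theorem arndtCond_nil (s t : ℕ) : ArndtCond s t [] := by
  simp [ArndtCond]

@[simp]
theorem arndtCond_singleton (s t a : ℕ) : ArndtCond s t [a] := by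
  simp [ArndtCond]

@[simp]
theorem arndtCond_cons_cons {s t a b : ℕ} {r : List ℕ} :
    ArndtCond s t (a :: b :: r) ↔ t * b < s * a ∧ ArndtCond s t r := by
  have two_mul_succ (i : ℕ) : 2 * (i + 1) = 2 * i + 1 + 1 := by ring
  rw [ArndtCond, ArndtCond, ← Nat.and_forall_add_one]
  simp only [two_mul_succ, List.length_cons, List.getElem!_cons_succ, List.getElem!_cons_zero,
    Nat.mul_zero, zero_add, Nat.add_lt_add_iff_right]
  simp

open Classical in
noncomputable def arndtComps (s t n : ℕ) : Finset (List ℕ) :=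
  ((Finset.univ : Finset (Composition n)).image Composition.blocks).filter (ArndtCond s t)

theorem mem_arndtComps {s t n : ℕ} {l : List ℕ} :
    l ∈ arndtComps s t n ↔ IsComposition n l ∧ ArndtCond s t l := by
  simp only [arndtComps, Finset.mem_filter, Finset.mem_image, Finset.mem_univ, true_and]
  constructor
  · rintro ⟨⟨c, rfl⟩, h⟩
    exact ⟨⟨fun _ => c.blocks_pos, c.blocks_sum⟩, h⟩
  · rintro ⟨⟨hpos, rfl⟩, h⟩
    exact ⟨⟨⟨l, hpos _, rfl⟩, rfl⟩, h⟩

theorem arndtCount_eq_card (s t n : ℕ) : arndtCount s t n = (arndtComps s t n).card := by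
  rw [arndtCount, ← Nat.card_eq_finsetCard]
  exact Nat.card_congr (Equiv.subtypeEquivRight fun _ => mem_arndtComps.symm)

def HasTightLeadingPair : List ℕ → Prop
  | a :: b :: _ => a = b + 1
  | _ => False

open Classical in
noncomputable def tightArndtComps (n : ℕ) : Finset (List ℕ) :=
  (arndtComps 1 1 n).filter HasTightLeadingPair

theorem arndtComps_zero : arndtComps 1 1 0 = {[]} := by
  ext (_ | ⟨a, r⟩) <;> simp [mem_arndtComps, IsComposition]
  omega

theorem arndtComps_one : arndtComps 1 1 1 = {[1]} := by
  ext (_ | ⟨a, _ | ⟨b, r⟩⟩) <;> simp [mem_arndtComps, IsComposition] <;> omega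

theorem tightArndtComps_eq_empty {n : ℕ} (hn : n < 3) : tightArndtComps n = ∅ := by
  ext (_ | ⟨a, _ | ⟨b, r⟩⟩) <;>
    simp [tightArndtComps, mem_arndtComps, IsComposition, HasTightLeadingPair]
  omega

open Classical in
theorem card_arndtComps_succ {n : ℕ} (hn : 0 < n) :
    (arndtComps 1 1 (n + 1)).card = (tightArndtComps (n + 1)).card + (arndtComps 1 1 n).card := by
  rw [tightArndtComps, ← Finset.card_filter_add_card_filter_not HasTightLeadingPair]
  congr 1
  refine Finset.card_nbij' (List.modifyHead (· - 1)) (List.modifyHead (· + 1)) ?_ ?_ ?_ ?_ <;>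
  · rintro (_ | ⟨a, _ | ⟨b, r⟩⟩) h <;>
      simp only [Finset.mem_coe, Finset.mem_filter, mem_arndtComps] at h ⊢ <;>
      simp_all [IsComposition, HasTightLeadingPair] <;> omega

theorem card_tightArndtComps_add_three (n : ℕ) :
    (tightArndtComps (n + 3)).card = (tightArndtComps (n + 1)).card + (arndtComps 1 1 n).card := by
  rw [← Finset.card_filter_add_card_filter_not (fun l => l.take 2 = [2, 1]), add_comm]
  congr 1
  · refine Finset.card_nbij' (fun l => (l.take 2).map (· - 1) ++ l.drop 2)
      (fun l => (l.take 2).map (· + 1) ++ l.drop 2) ?_ ?_ ?_ ?_ <;>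
    · rintro (_ | ⟨a, _ | ⟨b, r⟩⟩) h <;>
        simp only [Finset.mem_coe, tightArndtComps, Finset.mem_filter, mem_arndtComps] at h ⊢ <;>
        simp_all [IsComposition, HasTightLeadingPair] <;> omega
  · refine Finset.card_nbij' (List.drop 2) ([2, 1] ++ ·) ?_ ?_ ?_ ?_ <;>
    · rintro (_ | ⟨a, _ | ⟨b, r⟩⟩) h <;>
        simp only [Finset.mem_coe, tightArndtComps, Finset.mem_filter, mem_arndtComps] at h ⊢ <;>
        simp_all [IsComposition, HasTightLeadingPair] <;> omega

theorem card_arndtComps_add_three (n : ℕ) :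
    (arndtComps 1 1 (n + 3)).card =
      (arndtComps 1 1 (n + 2)).card + (arndtComps 1 1 (n + 1)).card := by
  have h₁ : (arndtComps 1 1 (n + 3)).card =
      (tightArndtComps (n + 3)).card + (arndtComps 1 1 (n + 2)).card :=
    card_arndtComps_succ (by omega)
  have h₂ := card_tightArndtComps_add_three n
  have h₃ : (arndtComps 1 1 (n + 1)).card =
      (tightArndtComps (n + 1)).card + (arndtComps 1 1 n).card := by
    rcases n.eq_zero_or_pos with rfl | hn
    · simp [arndtComps_zero, arndtComps_one, tightArndtComps_eq_empty]
    · exact card_arndtComps_succ hn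
  omega

theorem card_arndtComps_eq_fib : ∀ {n : ℕ}, 0 < n → (arndtComps 1 1 n).card = Nat.fib n
  | 1, _ => by simp [arndtComps_one]
  | 2, _ => by simp [card_arndtComps_succ, tightArndtComps_eq_empty, arndtComps_one]
  | n + 3, _ => by
    rw [card_arndtComps_add_three, card_arndtComps_eq_fib n.succ_pos,
      card_arndtComps_eq_fib (n + 1).succ_pos, Nat.fib_add_two (n := n + 1), add_comm]

theorem arndt_eq_fib (n : ℕ) (hn : 0 < n) :
    arndtCount 1 1 n = Nat.fib n := by
  rw [arndtCount_eq_card, card_arndtComps_eq_fib hn]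
end

section
/- Let s, t be positive integers and let c ≥ 0, q ≥ 0, and 1 ≤ r ≤ s−1 be integers. Set a' = c + q·t + ⌈(r·t+1)/s⌉ and b' = q·s + r. Then a' and b' are positive, s·a' > t·b', and a' + b' = c + q·(s+t) + r + ⌈(r·t+1)/s⌉. -/
/-! Since `s * ⌈(r t + 1) / s⌉ ≥ r t + 1`, we get
`s a' - t b' = s c + s ⌈(r t + 1) / s⌉ - r t ≥ 1`; the sum identity is a rearrangement. -/

theorem Nat.lt_mul_succ_ceilDiv {s : ℕ} (hs : 0 < s) (m : ℕ) : m < s * ((m + 1) ⌈/⌉ s) :=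
  Nat.lt_of_succ_le (le_smul_ceilDiv hs)

theorem inverse_pair_valid_general (s t c q r : ℕ) (hs : 0 < s)
    (hr1 : 1 ≤ r)
    (a' b' : ℕ) (ha' : a' = c + q * t + (r * t + 1) ⌈/⌉ s) (hb' : b' = q * s + r) :
    0 < a' ∧ 0 < b' ∧ t * b' < s * a' ∧
      a' + b' = c + q * (s + t) + r + (r * t + 1) ⌈/⌉ s := by
  have hceil := Nat.lt_mul_succ_ceilDiv hs (r * t)
  have hceil_pos : 0 < (r * t + 1) ⌈/⌉ s :=
    Nat.pos_of_mul_pos_left ((Nat.zero_le _).trans_lt hceil)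
  subst ha' hb'
  refine ⟨by omega, by omega, ?_, by ring⟩
  calc t * (q * s + r) = s * (q * t) + r * t := by ring
    _ < s * (q * t) + s * ((r * t + 1) ⌈/⌉ s) := by omega
    _ ≤ s * (c + q * t + (r * t + 1) ⌈/⌉ s) := by rw [mul_add, mul_add]; omega

theorem inverse_pair_valid (s t c q r : ℕ) (hs : 0 < s) (ht : 0 < t)
    (hr1 : 1 ≤ r) (hr2 : r ≤ s - 1)
    (a' b' : ℕ) (ha' : a' = c + q * t + (r * t + 1) ⌈/⌉ s) (hb' : b' = q * s + r) :
    0 < a' ∧ 0 < b' ∧ t * b' < s * a' ∧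
      a' + b' = c + q * (s + t) + r + (r * t + 1) ⌈/⌉ s :=
  inverse_pair_valid_general s t c q r hs hr1 a' b' ha' hb'
end

section
/- For relatively prime positive integers s and t, the map r ↦ (r + ⌈(r·t+1)/s⌉) mod (s+t) is injective on {0, 1, ..., s−1}, and its values are distinct nonzero residues modulo s+t. -/
/-! The residue `m_r` is best seen after multiplying by `s`: writing `r * t = s * q + ρ` with
`0 ≤ ρ < s`, we get `s * m_r = r * (s + t) + (s - ρ)`, so `s * m_r ≡ s - ρ (mod s + t)` with
`0 < s - ρ < s + t`. Hence `m_r` is never `0` modulo `s + t`, and equal residues force equal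
`ρ = r * t % s`, which determines `r < s` because `t` is invertible modulo `s`. -/

theorem Nat.add_one_ceilDiv (n : ℕ) {s : ℕ} (hs : 0 < s) : (n + 1) ⌈/⌉ s = n / s + 1 := by
  rw [Nat.ceilDiv_eq_add_pred_div, show n + 1 + s - 1 = n + s by omega, Nat.add_div_right _ hs]

theorem mul_residue_eq (r : ℕ) {s : ℕ} (t : ℕ) (hs : 0 < s) :
    s * (r + (r * t + 1) ⌈/⌉ s) = r * (s + t) + (s - r * t % s) := by
  have hdiv := Nat.div_add_mod (r * t) s
  have hmod : r * t % s < s := Nat.mod_lt _ hs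
  rw [Nat.add_one_ceilDiv _ hs]
  zify [hmod.le] at hdiv ⊢
  linear_combination hdiv

theorem mul_residue_mod (r : ℕ) {s t : ℕ} (hs : 0 < s) (ht : 0 < t) :
    s * (r + (r * t + 1) ⌈/⌉ s) % (s + t) = s - r * t % s := by
  rw [mul_residue_eq r t hs, Nat.add_comm, Nat.add_mul_mod_self_right, Nat.mod_eq_of_lt (by omega)]

theorem residues_injective_nonzero_general (s t : ℕ) (ht : 0 < t)
    (hco : Nat.Coprime s t) :
    Set.InjOn (fun r : ℕ => (r + (r * t + 1) ⌈/⌉ s) % (s + t)) (Set.Iio s) ∧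
    ∀ r < s, (r + (r * t + 1) ⌈/⌉ s) % (s + t) ≠ 0 := by
  constructor
  · intro r₁ (hr₁ : r₁ < s) r₂ (hr₂ : r₂ < s) heq
    have hs : 0 < s := by omega
    have hρ : r₁ * t % s = r₂ * t % s := by
      have := congrArg (fun m => s * m % (s + t)) heq
      simp only [Nat.mul_mod_mod, mul_residue_mod _ hs ht] at this
      have := Nat.mod_lt (r₁ * t) hs
      have := Nat.mod_lt (r₂ * t) hs
      omega
    exact (Nat.ModEq.cancel_right_of_coprime hco hρ).eq_of_lt_of_lt hr₁ hr₂
  · intro r hr hzero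
    have hs : 0 < s := by omega
    have := mul_residue_mod r hs ht
    rw [← Nat.mul_mod_mod, hzero, mul_zero, Nat.zero_mod] at this
    have := Nat.mod_lt (r * t) hs
    omega

theorem residues_injective_nonzero (s t : ℕ) (hs : 0 < s) (ht : 0 < t)
    (hco : Nat.Coprime s t) :
    Set.InjOn (fun r : ℕ => (r + (r * t + 1) ⌈/⌉ s) % (s + t)) (Set.Iio s) ∧
    ∀ r < s, (r + (r * t + 1) ⌈/⌉ s) % (s + t) ≠ 0 :=
  residues_injective_nonzero_general s t ht hco
end

section
/- The number of compositions of n into parts all congruent to 1 or 3 modulo 5 satisfies, for n ≥ 6, the recurrence b(n) = b(n−1) + b(n−3) + b(n−5), with b(0)=1, b(1)=1, b(2)=1, b(3)=2, b(4)=3, b(5)=4. -/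
noncomputable def b13 (n : ℕ) : ℕ := compCount {x : ℕ | x % 5 = 1 ∨ x % 5 = 3} n

/-! Splitting off the first part gives `c(n) = ∑_{a ∈ A, 0 < a ≤ n} c(n - a)` for any set of
parts `A`. When `A` is `p`-periodic, the parts `a > p` are exactly `p + a'` with `a' ∈ A`, and
their contribution `∑_{a' ∈ A, 0 < a' ≤ n - p} c(n - p - a')` collapses to `c(n - p)`. For
`A = {1, 3 mod 5}` the parts up to `5` are `1` and `3`. -/

open Finset

theorem isComposition_cons_iff {n a : ℕ} {l : List ℕ} :
    IsComposition n (a :: l) ↔ 0 < a ∧ a ≤ n ∧ IsComposition (n - a) l := by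
  simp only [IsComposition, List.forall_mem_cons, List.sum_cons]
  constructor
  · rintro ⟨⟨ha, hl⟩, hsum⟩
    exact ⟨ha, by omega, hl, by omega⟩
  · rintro ⟨ha, han, hl, hsum⟩
    exact ⟨⟨ha, hl⟩, by omega⟩

theorem IsComposition.ne_nil {n : ℕ} {l : List ℕ} (hl : IsComposition n l) (hn : 0 < n) :
    l ≠ [] := by
  rintro rfl
  exact hn.ne hl.2

section

variable (A : Set ℕ)

abbrev RestrictedComposition (n : ℕ) :=
  {l : List ℕ // IsComposition n l ∧ ∀ x ∈ l, x ∈ A}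

instance (n : ℕ) : Finite (RestrictedComposition A n) :=
  Finite.of_injective (fun l => (⟨l.1, l.2.1.1 _, l.2.1.2⟩ : Composition n))
    fun _ _ h => Subtype.ext (congrArg Composition.blocks h)

theorem compCount_zero : compCount A 0 = 1 := by
  have : Unique (RestrictedComposition A 0) := by
    refine ⟨⟨⟨[], ⟨by simp, by simp⟩, by simp⟩⟩, ?_⟩
    rintro ⟨l, ⟨hpos, hsum⟩, -⟩
    ext1
    rw [List.sum_eq_zero_iff] at hsum
    exact List.eq_nil_iff_forall_not_mem.2 fun x hx => (hpos x hx).ne' (hsum x hx)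
  exact Nat.card_unique

variable [DecidablePred (· ∈ A)]

def RestrictedComposition.consEquiv {n : ℕ} (hn : 0 < n) :
    RestrictedComposition A n ≃
      Σ a : {a // a ∈ (Ioc 0 n).filter (· ∈ A)}, RestrictedComposition A (n - a) where
  toFun
    | ⟨[], hl⟩ => absurd rfl (hl.1.ne_nil hn)
    | ⟨a :: t, hl⟩ =>
      ⟨⟨a, by
          obtain ⟨ha, han, -⟩ := isComposition_cons_iff.1 hl.1
          simpa [ha, han] using hl.2 a List.mem_cons_self⟩,
        ⟨t, (isComposition_cons_iff.1 hl.1).2.2,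
          fun x hx => hl.2 x (List.mem_cons_of_mem _ hx)⟩⟩
  invFun p := by
    refine ⟨p.1.1 :: p.2.1, ?_⟩
    obtain ⟨⟨ha, han⟩, haA⟩ : (0 < p.1.1 ∧ p.1.1 ≤ n) ∧ p.1.1 ∈ A := by
      simpa only [mem_filter, mem_Ioc] using p.1.2
    exact ⟨isComposition_cons_iff.2 ⟨ha, han, p.2.2.1⟩,
      List.forall_mem_cons.2 ⟨haA, p.2.2.2⟩⟩
  left_inv
    | ⟨[], hl⟩ => absurd rfl (hl.1.ne_nil hn)
    | ⟨_ :: _, _⟩ => rfl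
  right_inv
    | ⟨⟨_, _⟩, _, _⟩ => rfl

theorem compCount_eq_sum {n : ℕ} (hn : 0 < n) :
    compCount A n = ∑ a ∈ Ioc 0 n with a ∈ A, compCount A (n - a) := by
  rw [compCount, Nat.card_congr (RestrictedComposition.consEquiv A hn), Nat.card_sigma]
  exact sum_coe_sort _ fun a => compCount A (n - a)

theorem compCount_eq_sum_add_of_periodic {p n : ℕ} (hA : ∀ a, a + p ∈ A ↔ a ∈ A)
    (hn : p < n) :
    compCount A n = ∑ a ∈ Ioc 0 p with a ∈ A, compCount A (n - a) + compCount A (n - p) := by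
  have hshift : ∑ a ∈ Ioc p n, (if a ∈ A then compCount A (n - a) else 0)
      = ∑ a ∈ Ioc 0 (n - p), if a ∈ A then compCount A (n - p - a) else 0 := by
    have : Ioc p n = (Ioc 0 (n - p)).map (addRightEmbedding p) := by
      simp [Nat.sub_add_cancel hn.le]
    rw [this, sum_map]
    simp only [addRightEmbedding_apply, hA, tsub_add_eq_tsub_tsub_swap]
  rw [compCount_eq_sum A (by omega), compCount_eq_sum A (n := n - p) (by omega),
    sum_filter, sum_filter, sum_filter, ← sum_Ioc_consecutive _ (Nat.zero_le p) hn.le, hshift]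

end

theorem filter_Ioc_mem_one_three_mod_five {n : ℕ} (hn : n ≤ 5) :
    (Ioc 0 n).filter (· ∈ {x : ℕ | x % 5 = 1 ∨ x % 5 = 3}) =
      ({1, 3} : Finset ℕ).filter (· ≤ n) := by
  ext a
  simp only [mem_filter, mem_Ioc, Set.mem_ofPred_eq, mem_insert, mem_singleton]
  omega

theorem b13_zero : b13 0 = 1 := compCount_zero _

theorem b13_eq_of_pos_of_le_five {n : ℕ} (hn : 0 < n) (hn5 : n ≤ 5) :
    b13 n = ∑ a ∈ ({1, 3} : Finset ℕ) with a ≤ n, b13 (n - a) := by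
  rw [b13, compCount_eq_sum _ hn, filter_Ioc_mem_one_three_mod_five hn5]
  rfl

theorem b13_eq_of_six_le {n : ℕ} (hn : 6 ≤ n) :
    b13 n = b13 (n - 1) + b13 (n - 3) + b13 (n - 5) := by
  rw [b13, compCount_eq_sum_add_of_periodic _ (p := 5) (fun a => by simp) (by omega),
    filter_Ioc_mem_one_three_mod_five le_rfl]
  simp [filter_insert, filter_singleton, b13]

theorem comp_1_3_mod_5_recurrence :
    (∀ n : ℕ, 6 ≤ n → b13 n = b13 (n - 1) + b13 (n - 3) + b13 (n - 5)) ∧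
    b13 0 = 1 ∧ b13 1 = 1 ∧ b13 2 = 1 ∧ b13 3 = 2 ∧ b13 4 = 3 ∧ b13 5 = 4 := by
  refine ⟨fun n hn => b13_eq_of_six_le hn, ?_⟩
  simp [b13_eq_of_pos_of_le_five, filter_insert, filter_singleton, b13_zero]
end

section
/- The number of compositions of n with s·c_{2i-1} > c_{2i} for every valid i (i.e., a_{s,1}(n)) equals the number of compositions of n into parts congruent to one of 1, 2, ..., s modulo s+1, and satisfies the s-bonacci-type recurrence a_{s,1}(n) = Σ_{j=1}^{s+1} a_{s,1}(n−j) for n > s+1. -/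
open Finset

def ArndtPairs (s t : ℕ) : List ℕ → Prop
  | x :: y :: rest => t * y < s * x ∧ ArndtPairs s t rest
  | _ => True

theorem arndtCond_iff_arndtPairs (s t : ℕ) : ∀ l : List ℕ, ArndtCond s t l ↔ ArndtPairs s t l
  | [] => by simp [ArndtCond, ArndtPairs]
  | [x] => by simp [ArndtCond, ArndtPairs]
  | x :: y :: rest => by
    rw [ArndtPairs, ← arndtCond_iff_arndtPairs s t rest]
    constructor
    · intro h
      refine ⟨by simpa using h 0 (by simp), fun i hi => ?_⟩
      simpa [Nat.mul_add] using h (i + 1) (by simp; omega)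
    · rintro ⟨h0, h⟩ (_ | i) hi
      · simpa using h0
      · simpa [Nat.mul_add] using h i (by simp at hi; omega)

instance (n : ℕ) (P : List ℕ → Prop) : Finite {l : List ℕ // IsComposition n l ∧ P l} :=
  Finite.of_injective (fun l => (⟨l.1, fun hi => l.2.1.1 _ hi, l.2.1.2⟩ : Composition n))
    fun _ _ h => Subtype.ext (congrArg Composition.blocks h)

def compositionFirstPartEquiv (A : Set ℕ) [DecidablePred (· ∈ A)] {n : ℕ} (hn : 0 < n) :
    {l : List ℕ // IsComposition n l ∧ ∀ x ∈ l, x ∈ A} ≃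
      Σ a : (Icc 1 n).filter (· ∈ A), {l : List ℕ // IsComposition (n - a) l ∧ ∀ x ∈ l, x ∈ A} where
  toFun l :=
    have hl : l.1 ≠ [] := by rintro h; have := l.2.1.2; simp only [h, List.sum_nil] at this; omega
    have hsum : l.1.head hl + l.1.tail.sum = n := by
      rw [← List.sum_cons, List.cons_head_tail, l.2.1.2]
    have hmem : ∀ x ∈ l.1.tail, x ∈ l.1 := fun x hx => List.mem_of_mem_tail hx
    ⟨⟨l.1.head hl, mem_filter.2
        ⟨mem_Icc.2 ⟨l.2.1.1 _ (List.head_mem hl), by omega⟩, l.2.2 _ (List.head_mem hl)⟩⟩,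
      ⟨l.1.tail, ⟨fun x hx => l.2.1.1 x (hmem x hx), by simp only; omega⟩,
        fun x hx => l.2.2 x (hmem x hx)⟩⟩
  invFun p :=
    have ha := mem_filter.1 p.1.2
    have hai := mem_Icc.1 ha.1
    ⟨p.1.1 :: p.2.1, ⟨by simpa [show 0 < p.1.1 by omega] using p.2.2.1.1,
      by rw [List.sum_cons, p.2.2.1.2]; omega⟩, by simpa [ha.2] using p.2.2.2⟩
  left_inv l := Subtype.ext (List.cons_head_tail _)
  right_inv p := rfl

theorem compCount_eq_sum_filter (A : Set ℕ) [DecidablePred (· ∈ A)] {n : ℕ} (hn : 0 < n) :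
    compCount A n = ∑ a ∈ (Icc 1 n).filter (· ∈ A), compCount A (n - a) := by
  rw [compCount, Nat.card_congr (compositionFirstPartEquiv A hn), Nat.card_sigma]
  exact sum_coe_sort _ (fun a => compCount A (n - a))

theorem compCount_not_mod_eq_zero_rec {s n : ℕ} (hn : s + 1 < n) :
    compCount {x | x % (s + 1) ≠ 0} n =
      ∑ j ∈ Icc 1 (s + 1), compCount {x | x % (s + 1) ≠ 0} (n - j) := by
  set c := compCount {x | x % (s + 1) ≠ 0}
  set f : ℕ → ℕ := fun a => if a % (s + 1) ≠ 0 then c (n - a) else 0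
  have hc : ∀ m, 0 < m →
      c m = ∑ a ∈ Ico 1 (m + 1), if a % (s + 1) ≠ 0 then c (m - a) else 0 := by
    intro m hm
    rw [Ico_add_one_right_eq_Icc, ← sum_filter]
    exact compCount_eq_sum_filter _ hm
  have hlow : ∑ a ∈ Ico 1 (s + 2), f a = ∑ j ∈ Icc 1 s, c (n - j) := by
    rw [sum_Ico_succ_top (by omega), ← Ico_add_one_right_eq_Icc]
    simp only [f, Nat.mod_self, ne_eq, not_true_eq_false, if_false, add_zero]
    refine sum_congr rfl fun a ha => if_pos ?_
    have := mem_Ico.1 ha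
    rw [Nat.mod_eq_of_lt (by omega)]
    omega
  have hhigh : ∑ a ∈ Ico (s + 2) (n + 1), f a = c (n - (s + 1)) := by
    rw [show s + 2 = 1 + (s + 1) by omega, show n + 1 = n - (s + 1) + 1 + (s + 1) by omega,
      ← sum_Ico_add', hc (n - (s + 1)) (by omega)]
    refine sum_congr rfl fun a _ => ?_
    simp only [f, Nat.add_mod_right]
    congr 2
    omega
  rw [hc n (by omega), sum_Icc_succ_top (by omega), ← hhigh, ← hlow]
  exact (sum_Ico_consecutive f (by omega) (by omega)).symm

def arndtEncode (s : ℕ) : List ℕ → List ℕ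
  | x :: y :: rest => List.replicate (x - y / s - 1) 1 ++ (y + y / s + 1) :: arndtEncode s rest
  | [z] => List.replicate z 1
  | [] => []

/-- `a` is the length of the run of ones read since the last part `≠ 1`. -/
def arndtDecode (s : ℕ) : ℕ → List ℕ → List ℕ
  | a, [] => if a = 0 then [] else [a]
  | a, b :: rest =>
    if b = 1 then arndtDecode s (a + 1) rest
    else (a + b / (s + 1) + 1) :: (b - b / (s + 1) - 1) :: arndtDecode s 0 rest

section
variable {s : ℕ}

theorem add_div_add_one_div_mod_succ (hs : 0 < s) (y : ℕ) :
    (y + y / s + 1) / (s + 1) = y / s ∧ (y + y / s + 1) % (s + 1) = y % s + 1 := by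
  rw [Nat.div_mod_unique (by omega)]
  constructor
  · linarith [Nat.div_add_mod y s]
  · have := Nat.mod_lt y hs
    omega

theorem sub_div_succ_sub_one_div (hs : 0 < s) {b : ℕ} (hb : b % (s + 1) ≠ 0) :
    (b - b / (s + 1) - 1) / s = b / (s + 1) ∧
      b - b / (s + 1) - 1 + b / (s + 1) + 1 = b := by
  have hdiv := Nat.div_add_mod b (s + 1)
  have hlt := Nat.mod_lt b (show 0 < s + 1 by omega)
  rw [add_one_mul] at hdiv
  have hdiv' : (b - b / (s + 1) - 1) / s = b / (s + 1) :=
    (Nat.div_mod_unique hs (c := b % (s + 1) - 1)).2 ⟨by omega, by omega⟩ |>.1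
  exact ⟨hdiv', by omega⟩

theorem arndtDecode_replicate_append (a k : ℕ) (m : List ℕ) :
    arndtDecode s a (List.replicate k 1 ++ m) = arndtDecode s (a + k) m := by
  induction k generalizing a with
  | zero => rfl
  | succ k ih => rw [List.replicate_succ, List.cons_append, arndtDecode, if_pos rfl, ih,
      Nat.add_right_comm, Nat.add_assoc]

theorem arndtDecode_arndtEncode (hs : 0 < s) :
    ∀ l : List ℕ, (∀ x ∈ l, 0 < x) → ArndtPairs s 1 l → arndtDecode s 0 (arndtEncode s l) = l
  | [], _, _ => rfl
  | [z], hpos, _ => by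
    rw [arndtEncode, ← List.append_nil (List.replicate z 1), arndtDecode_replicate_append,
      arndtDecode, if_neg (by simpa using (hpos z (by simp)).ne'), zero_add]
  | x :: y :: rest, hpos, ⟨hxy, hrest⟩ => by
    have hy : 0 < y := hpos y (by simp)
    have hyx : y / s < x := (Nat.div_lt_iff_lt_mul hs).2 (by simpa [mul_comm] using hxy)
    rw [arndtEncode, arndtDecode_replicate_append, arndtDecode,
      if_neg (show y + y / s + 1 ≠ 1 by generalize y / s = q; omega),
      (add_div_add_one_div_mod_succ hs y).1,
      arndtDecode_arndtEncode hs rest (fun x hx => hpos x (by simp [hx])) hrest]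
    rw [show 0 + (x - y / s - 1) + y / s + 1 = x by omega,
      show y + y / s + 1 - y / s - 1 = y by omega]

theorem arndtEncode_arndtDecode (hs : 0 < s) (a : ℕ) (m : List ℕ)
    (hm : ∀ b ∈ m, b % (s + 1) ≠ 0) :
    arndtEncode s (arndtDecode s a m) = List.replicate a 1 ++ m := by
  induction m generalizing a with
  | nil =>
    unfold arndtDecode
    split_ifs with ha
    · simp [ha, arndtEncode]
    · simp [arndtEncode]
  | cons b m ih =>
    have hm' : ∀ b ∈ m, b % (s + 1) ≠ 0 := fun b hb => hm b (by simp [hb])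
    unfold arndtDecode
    split_ifs with hb
    · rw [ih _ hm', hb, List.replicate_succ', List.append_assoc, List.singleton_append]
    · obtain ⟨hdiv, hsum⟩ := sub_div_succ_sub_one_div hs (hm b (by simp))
      rw [arndtEncode, hdiv, hsum, ih 0 hm',
        show a + b / (s + 1) + 1 - b / (s + 1) - 1 = a by omega]
      rfl

theorem sum_arndtEncode (hs : 0 < s) :
    ∀ l : List ℕ, ArndtPairs s 1 l → (arndtEncode s l).sum = l.sum
  | [], _ => rfl
  | [z], _ => by simp [arndtEncode]
  | x :: y :: rest, ⟨hxy, hrest⟩ => by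
    have hyx : y / s < x := (Nat.div_lt_iff_lt_mul hs).2 (by simpa [mul_comm] using hxy)
    simp only [arndtEncode, List.sum_append, List.sum_replicate, List.sum_cons,
      sum_arndtEncode hs rest hrest, smul_eq_mul, mul_one]
    omega

theorem arndtEncode_mod_ne_zero (hs : 0 < s) :
    ∀ l : List ℕ, ∀ b ∈ arndtEncode s l, b % (s + 1) ≠ 0
  | [] => by simp [arndtEncode]
  | [z] => by
    intro b hb
    rw [List.eq_of_mem_replicate hb, Nat.one_mod_eq_one.2 (by omega)]
    omega
  | x :: y :: rest => by
    intro b hb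
    simp only [arndtEncode, List.mem_append, List.mem_cons] at hb
    rcases hb with hb | rfl | hb
    · rw [List.eq_of_mem_replicate hb, Nat.one_mod_eq_one.2 (by omega)]
      omega
    · rw [(add_div_add_one_div_mod_succ hs y).2]
      omega
    · exact arndtEncode_mod_ne_zero hs rest b hb

theorem arndtDecode_pos_and_arndtPairs (hs : 0 < s) (a : ℕ) (m : List ℕ)
    (hm : ∀ b ∈ m, b % (s + 1) ≠ 0) :
    (∀ x ∈ arndtDecode s a m, 0 < x) ∧ ArndtPairs s 1 (arndtDecode s a m) := by
  induction m generalizing a with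
  | nil =>
    unfold arndtDecode
    split_ifs with ha
    · simp [ArndtPairs]
    · simpa [ArndtPairs] using Nat.pos_of_ne_zero ha
  | cons b m ih =>
    have hm' : ∀ b ∈ m, b % (s + 1) ≠ 0 := fun b hb => hm b (by simp [hb])
    unfold arndtDecode
    split_ifs with hb
    · exact ih _ hm'
    · obtain ⟨hdiv, hsum⟩ := sub_div_succ_sub_one_div hs (hm b (by simp))
      set q := b / (s + 1)
      set y := b - q - 1
      clear_value q y
      obtain ⟨ihpos, ihpairs⟩ := ih 0 hm'
      have hy : y ≠ 0 := by
        rintro h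
        rw [h, Nat.zero_div] at hdiv
        omega
      refine ⟨?_, ?_, ihpairs⟩
      · simp only [List.mem_cons]
        rintro x (rfl | hx | hx)
        · omega
        · exact hx ▸ Nat.pos_of_ne_zero hy
        · exact ihpos x hx
      · calc 1 * y < s * (y / s + 1) := by simpa using Nat.lt_mul_div_succ y hs
          _ ≤ s * (a + q + 1) :=
            Nat.mul_le_mul_left s (show y / s + 1 ≤ a + q + 1 by rw [hdiv]; omega)

end

def arndtEquiv {s : ℕ} (hs : 0 < s) (n : ℕ) :
    {l : List ℕ // IsComposition n l ∧ ArndtCond s 1 l} ≃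
      {m : List ℕ // IsComposition n m ∧ ∀ x ∈ m, x ∈ {x | x % (s + 1) ≠ 0}} where
  toFun l :=
    have hpairs := (arndtCond_iff_arndtPairs s 1 l.1).1 l.2.2
    have hmod := arndtEncode_mod_ne_zero hs l.1
    ⟨arndtEncode s l.1,
      ⟨fun b hb => Nat.pos_of_ne_zero fun h => hmod b hb (by rw [h, Nat.zero_mod]),
        (sum_arndtEncode hs l.1 hpairs).trans l.2.1.2⟩, hmod⟩
  invFun m :=
    have hdec := arndtDecode_pos_and_arndtPairs hs 0 m.1 m.2.2
    ⟨arndtDecode s 0 m.1, ⟨hdec.1, by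
      rw [← sum_arndtEncode hs _ hdec.2, arndtEncode_arndtDecode hs 0 m.1 m.2.2]
      exact m.2.1.2⟩, (arndtCond_iff_arndtPairs s 1 _).2 hdec.2⟩
  left_inv l := Subtype.ext <| arndtDecode_arndtEncode hs l.1 l.2.1.1
    ((arndtCond_iff_arndtPairs s 1 l.1).1 l.2.2)
  right_inv m := Subtype.ext <| arndtEncode_arndtDecode hs 0 m.1 m.2.2

theorem arndt_s_1 (s : ℕ) (hs : 0 < s) :
    (∀ n : ℕ, arndtCount s 1 n =
      compCount {x : ℕ | ∃ j, 1 ≤ j ∧ j ≤ s ∧ x % (s + 1) = j} n) ∧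
    (∀ n : ℕ, s + 1 < n →
      arndtCount s 1 n = ∑ j ∈ Finset.Icc 1 (s + 1), arndtCount s 1 (n - j)) := by
  have hparts : {x : ℕ | ∃ j, 1 ≤ j ∧ j ≤ s ∧ x % (s + 1) = j} = {x | x % (s + 1) ≠ 0} := by
    ext x
    have := Nat.mod_lt x (show 0 < s + 1 by omega)
    constructor
    · rintro ⟨j, hj, -, rfl⟩
      exact Nat.pos_iff_ne_zero.1 hj
    · intro hx
      exact ⟨x % (s + 1), Nat.pos_of_ne_zero hx, by omega, rfl⟩
  have hcount (n : ℕ) : arndtCount s 1 n = compCount {x | x % (s + 1) ≠ 0} n :=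
    Nat.card_congr (arndtEquiv hs n)
  refine ⟨fun n => hparts ▸ hcount n, fun n hn => ?_⟩
  simp only [hcount]
  exact compCount_not_mod_eq_zero_rec hn
end
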